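/- arXiv:2104.09717 — 7 statements merged into one kernel-verified Lean document; each statement's English description precedes it below -/
import Mathlib

section
/- If a function R : ℕ × ℕ → ℕ satisfies R(d,ℓ) = 1 when d = 0 or ℓ = 0, and R(d,ℓ) ≤ 1 + 2·R(d,ℓ-1) + R(d-1,ℓ) for all d,ℓ ≥ 1, then R(d,ℓ) ≤ 2^(ℓ+1) · C(d+ℓ, ℓ) − 1 for all d,ℓ ∈ ℕ. -/
/-!
Shifting by one turns the recurrence into the homogeneous inequality
`R (d, ℓ) + 1 ≤ 2 * (R (d, ℓ - 1) + 1) + (R (d - 1, ℓ) + 1)`, and Pascal's rule shows that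
`2 ^ (ℓ + 1) * C(d + ℓ, ℓ)` satisfies it with equality, while dominating `R + 1 = 2` on the
boundary. A double induction on `d` and `ℓ` then gives `R (d, ℓ) + 1 ≤ 2 ^ (ℓ + 1) * C(d + ℓ, ℓ)`.
-/

theorem two_pow_mul_choose_succ_succ (d ℓ : ℕ) :
    2 ^ (ℓ + 1 + 1) * (d + 1 + (ℓ + 1)).choose (ℓ + 1) =
      2 * (2 ^ (ℓ + 1) * (d + 1 + ℓ).choose ℓ) + 2 ^ (ℓ + 1 + 1) * (d + (ℓ + 1)).choose (ℓ + 1) := by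
  rw [show d + 1 + (ℓ + 1) = d + 1 + ℓ + 1 by omega, Nat.choose_succ_succ,
    show d + 1 + ℓ = d + (ℓ + 1) by omega]
  ring

theorem add_one_le_two_pow_mul_choose (R : ℕ × ℕ → ℕ)
    (hbase : ∀ d ℓ : ℕ, d = 0 ∨ ℓ = 0 → R (d, ℓ) ≤ 1)
    (hrec : ∀ d ℓ : ℕ, 1 ≤ d → 1 ≤ ℓ →
      R (d, ℓ) ≤ 1 + 2 * R (d, ℓ - 1) + R (d - 1, ℓ)) (d ℓ : ℕ) :
    R (d, ℓ) + 1 ≤ 2 ^ (ℓ + 1) * (d + ℓ).choose ℓ := by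
  induction d generalizing ℓ with
  | zero =>
    have hR := hbase 0 ℓ (Or.inl rfl)
    have hpow : 2 ≤ 2 ^ (ℓ + 1) := Nat.le_self_pow (by omega) 2
    simp only [Nat.zero_add, Nat.choose_self, Nat.mul_one]
    omega
  | succ d ihd =>
    induction ℓ with
    | zero =>
      have hR := hbase (d + 1) 0 (Or.inr rfl)
      simp only [Nat.choose_zero_right]
      omega
    | succ ℓ ihℓ =>
      have hstep := hrec (d + 1) (ℓ + 1) (by omega) (by omega)
      simp only [Nat.add_sub_cancel] at hstep
      have hbelow := ihd (ℓ + 1)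
      rw [two_pow_mul_choose_succ_succ]
      omega

/-- The recurrence bounding the number of recursive calls in the Liverpool
variant of the quasipolynomial recursive parity game algorithm:
if `R (d, ℓ) = 1` whenever `d = 0` or `ℓ = 0`, and
`R (d, ℓ) ≤ 1 + 2 * R (d, ℓ - 1) + R (d - 1, ℓ)` for all `d, ℓ ≥ 1`, then
`R (d, ℓ) ≤ 2 ^ (ℓ + 1) * (d + ℓ).choose ℓ - 1` for all `d, ℓ`. -/
theorem liverpool_recurrence_bound (R : ℕ × ℕ → ℕ)
    (hbase : ∀ d ℓ : ℕ, d = 0 ∨ ℓ = 0 → R (d, ℓ) = 1)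
    (hrec : ∀ d ℓ : ℕ, 1 ≤ d → 1 ≤ ℓ →
      R (d, ℓ) ≤ 1 + 2 * R (d, ℓ - 1) + R (d - 1, ℓ)) :
    ∀ d ℓ : ℕ, R (d, ℓ) ≤ 2 ^ (ℓ + 1) * (d + ℓ).choose ℓ - 1 := fun d ℓ =>
  Nat.le_sub_one_of_lt <|
    add_one_le_two_pow_mul_choose R (fun d ℓ h => (hbase d ℓ h).le) hrec d ℓ
end

section
/- Fix n ≥ 1. If a function R : ℕ × ℕ → ℕ satisfies R(d,ℓ) = 1 when d = 0 or ℓ = 0, and R(d,ℓ) ≤ 1 + n·R(d-1,ℓ-1) + R(d-1,ℓ) for all d,ℓ ≥ 1, then R(d,ℓ) ≤ 2·n^ℓ·C(d+ℓ, ℓ) − 1 for all d,ℓ ∈ ℕ. -/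
/-- The recurrence bounding the number of recursive calls in the Warsaw
variant (Parys' original algorithm): fix `n ≥ 1`; if `R (d, ℓ) = 1` whenever
`d = 0` or `ℓ = 0`, and `R (d, ℓ) ≤ 1 + n * R (d - 1, ℓ - 1) + R (d - 1, ℓ)`
for all `d, ℓ ≥ 1`, then `R (d, ℓ) ≤ 2 * n ^ ℓ * (d + ℓ).choose ℓ - 1`. -/
theorem warsaw_recurrence_bound (n : ℕ) (hn : 1 ≤ n) (R : ℕ × ℕ → ℕ)
    (hbase : ∀ d ℓ : ℕ, d = 0 ∨ ℓ = 0 → R (d, ℓ) = 1)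
    (hrec : ∀ d ℓ : ℕ, 1 ≤ d → 1 ≤ ℓ →
      R (d, ℓ) ≤ 1 + n * R (d - 1, ℓ - 1) + R (d - 1, ℓ)) :
    ∀ d ℓ : ℕ, R (d, ℓ) ≤ 2 * n ^ ℓ * (d + ℓ).choose ℓ - 1 := by
  have key : ∀ d ℓ : ℕ, R (d, ℓ) + 1 ≤ 2 * n ^ ℓ * (d + ℓ).choose ℓ := by
    intro d
    induction d with
    | zero =>
      intro ℓ
      rw [hbase 0 ℓ (Or.inl rfl)]
      have h1 : 1 ≤ n ^ ℓ := Nat.one_le_pow _ _ hn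
      have h2 : (0 + ℓ).choose ℓ = 1 := by simp
      rw [h2]
      linarith
    | succ d ih =>
      intro ℓ
      cases ℓ with
      | zero =>
        rw [hbase _ 0 (Or.inr rfl)]
        simp
      | succ l =>
        have h := hrec (d + 1) (l + 1) (by omega) (by omega)
        simp only [Nat.add_sub_cancel] at h
        have h1 := ih l
        have h2' : R (d, l + 1) + 1 ≤ 2 * n ^ (l + 1) * ((d + l + 1).choose (l + 1)) := by
          have := ih (l + 1)
          simpa [← add_assoc] using this
        have hm : n * R (d, l) + n ≤ n * (2 * n ^ l * (d + l).choose l) := by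
          calc n * R (d, l) + n = n * (R (d, l) + 1) := by ring
            _ ≤ n * (2 * n ^ l * (d + l).choose l) := Nat.mul_le_mul_left n h1
        have hmc : n * (2 * n ^ l * (d + l).choose l)
            ≤ n * (2 * n ^ l * (d + l + 1).choose l) :=
          Nat.mul_le_mul_left n (Nat.mul_le_mul_left _
            (Nat.choose_le_choose l (Nat.le_succ _)))
        have hp : (d + 1 + (l + 1)).choose (l + 1)
            = (d + l + 1).choose l + (d + l + 1).choose (l + 1) := by
          have e : d + 1 + (l + 1) = (d + l + 1) + 1 := by ring
          rw [e, Nat.choose_succ_succ]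
        rw [hp]
        have hrhs : 2 * n ^ (l + 1) * ((d + l + 1).choose l + (d + l + 1).choose (l + 1))
            = n * (2 * n ^ l * (d + l + 1).choose l)
              + 2 * n ^ (l + 1) * (d + l + 1).choose (l + 1) := by ring
        rw [hrhs]
        linarith
  intro d ℓ
  exact Nat.le_sub_of_add_le (key d ℓ)
end

section
/- Let D be a dominion of player p in a subgame G, and let X ⊆ G with D ∩ X = ∅. Then D is also a dominion of p in the subgame G \ Attr_{p̄}(X, G); in particular D ∩ Attr_{p̄}(X, G) = ∅. -/
/-!
A strategy `σ` witnessing the dominion keeps every finite `σ`-consistent path from `D` inside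
`D`, because such a path extends to a full `σ`-play in `U`. So from `D` the opponent can neither
reach `X` nor force the play into its attractor: by induction on the attractor, no attractor
vertex lies in `D`. The complement of an opponent attractor is a trap for the opponent, hence a
subgame, and it contains `D`; there `σ`, redirected wherever it would leave the trap, still
witnesses `D`, since along `σ`-consistent paths from `D` it never needs redirecting.
-/

/-- A game graph: a finite directed graph without self-loops in which every
vertex has at least one successor, with vertices partitioned between the two
players (`owner v = true` means the vertex belongs to player Even). -/
structure GameGraph (V : Type*) [Fintype V] where
  E : V → V → Prop
  owner : V → Bool
  no_self_loops : ∀ v, ¬ E v v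
  exists_succ : ∀ v, ∃ w, E v w

namespace GameGraph

variable {V : Type*} [Fintype V]

/-- Membership in the `p`-attractor of `S` inside the subgame induced by `U`. -/
inductive AttrIn (G : GameGraph V) (p : Bool) (U S : Set V) : V → Prop
  | base {v : V} : v ∈ U → v ∈ S → AttrIn G p U S v
  | own {v w : V} : v ∈ U → G.owner v = p → G.E v w → w ∈ U →
      AttrIn G p U S w → AttrIn G p U S v
  | opp {v : V} : v ∈ U → G.owner v ≠ p →
      (∀ w, G.E v w → w ∈ U → AttrIn G p U S w) → AttrIn G p U S v

/-- The `p`-attractor of `S` in the subgame induced by `U`. -/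
def attr (G : GameGraph V) (p : Bool) (U S : Set V) : Set V :=
  {v | G.AttrIn p U S v}

/-- `U` induces a valid subgame: every vertex of `U` has a successor in `U`. -/
def Subgame (G : GameGraph V) (U : Set V) : Prop :=
  ∀ v ∈ U, ∃ w, G.E v w ∧ w ∈ U

/-- `S` is `p`-closed in the subgame `U`. -/
def Closed (G : GameGraph V) (p : Bool) (U S : Set V) : Prop :=
  G.attr (!p) U (U \ S) = U \ S

/-- A strategy (given the history so far and the current vertex, pick the next
vertex) is legal for player `p` in the subgame `U` if it always moves along an
edge and stays in `U`. -/
def Legal (G : GameGraph V) (p : Bool) (U : Set V) (σ : List V → V → V) : Prop :=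
  ∀ l v, v ∈ U → G.owner v = p → G.E v (σ l v) ∧ σ l v ∈ U

/-- A play: an infinite path staying in `U`. -/
def ValidPlay (G : GameGraph V) (U : Set V) (ρ : ℕ → V) : Prop :=
  (∀ i, ρ i ∈ U) ∧ ∀ i, G.E (ρ i) (ρ (i + 1))

/-- The play `ρ` agrees with the strategy `σ` of player `p`. -/
def Agrees (G : GameGraph V) (p : Bool) (σ : List V → V → V) (ρ : ℕ → V) : Prop :=
  ∀ i, G.owner (ρ i) = p →
    ρ (i + 1) = σ (List.ofFn fun j : Fin i => ρ j) (ρ i)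

/-- Priority `c` occurs infinitely often in the play `ρ`. -/
def InfOcc (π : V → ℕ) (ρ : ℕ → V) (c : ℕ) : Prop :=
  ∀ N, ∃ i, N ≤ i ∧ π (ρ i) = c

/-- The play `ρ` is winning for player `p`: the highest priority occurring
infinitely often has `p`'s parity. -/
def WinsPlay (π : V → ℕ) (p : Bool) (ρ : ℕ → V) : Prop :=
  ∃ c, InfOcc π ρ c ∧ ((c % 2 = 0) ↔ p = true) ∧ ∀ c', InfOcc π ρ c' → c' ≤ c

/-- `D` is a dominion of player `p` in the subgame `U`: from every vertex of
`D`, player `p` has a winning strategy (in `U`) agreeing only with plays that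
stay forever in `D`. -/
def Dominion (G : GameGraph V) (π : V → ℕ) (p : Bool) (U D : Set V) : Prop :=
  D ⊆ U ∧ ∀ v ∈ D, ∃ σ : List V → V → V, G.Legal p U σ ∧
    ∀ ρ : ℕ → V, ρ 0 = v → G.ValidPlay U ρ → G.Agrees p σ ρ →
      (∀ i, ρ i ∈ D) ∧ WinsPlay π p ρ

/-- The winning region of player `p`: vertices from which `p` has a winning
strategy in the whole game. -/
def WinRegion (G : GameGraph V) (π : V → ℕ) (p : Bool) : Set V :=
  {v | ∃ σ : List V → V → V, G.Legal p Set.univ σ ∧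
    ∀ ρ : ℕ → V, ρ 0 = v → G.ValidPlay Set.univ ρ → G.Agrees p σ ρ →
      WinsPlay π p ρ}

end GameGraph

section HistorySequence

variable {α : Type*}

noncomputable def seqOfHistory (f : List α → α) : ℕ → α
  | n => f (List.ofFn fun j : Fin n => seqOfHistory f j)
termination_by n => n
decreasing_by exact j.isLt

theorem seqOfHistory_eq (f : List α → α) (n : ℕ) :
    seqOfHistory f n = f (List.ofFn fun j : Fin n => seqOfHistory f j) := by
  rw [seqOfHistory]

theorem exists_extension_of_history (ρ : ℕ → α) (n : ℕ) (next : List α → α → α) :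
    ∃ ρ' : ℕ → α, (∀ i ≤ n, ρ' i = ρ i) ∧
      ∀ i, n ≤ i → ρ' (i + 1) = next (List.ofFn fun j : Fin i => ρ' j) (ρ' i) := by
  refine ⟨seqOfHistory fun l =>
    if l.length ≤ n then ρ l.length else next l.dropLast (l.getLastD (ρ 0)),
    fun i hi => ?_, fun i hi => ?_⟩
  · rw [seqOfHistory_eq, List.length_ofFn, if_pos hi]
  · rw [seqOfHistory_eq, List.length_ofFn, if_neg (by omega), List.ofFn_succ_last,
      List.dropLast_concat, List.getLastD_concat]
    simp only [Fin.val_castSucc, Fin.val_last]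

end HistorySequence

namespace GameGraph

variable {V : Type*} [Fintype V] (G : GameGraph V)

noncomputable def succIn (U : Set V) (u : V) : V :=
  haveI : Nonempty V := ⟨u⟩
  Classical.epsilon fun w => G.E u w ∧ w ∈ U

theorem succIn_spec {U : Set V} (hU : G.Subgame U) {u : V} (hu : u ∈ U) :
    G.E u (G.succIn U u) ∧ G.succIn U u ∈ U :=
  Classical.epsilon_spec (hU u hu)

def ValidPrefix (U : Set V) (ρ : ℕ → V) (n : ℕ) : Prop :=
  (∀ i ≤ n, ρ i ∈ U) ∧ ∀ i < n, G.E (ρ i) (ρ (i + 1))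

def AgreesUpTo (p : Bool) (σ : List V → V → V) (ρ : ℕ → V) (n : ℕ) : Prop :=
  ∀ i < n, G.owner (ρ i) = p → ρ (i + 1) = σ (List.ofFn fun j : Fin i => ρ j) (ρ i)

variable {G}

theorem ValidPlay.validPrefix {U : Set V} {ρ : ℕ → V} (h : G.ValidPlay U ρ) (n : ℕ) :
    G.ValidPrefix U ρ n :=
  ⟨fun i _ => h.1 i, fun i _ => h.2 i⟩

theorem ValidPlay.mono {U U' : Set V} {ρ : ℕ → V} (h : G.ValidPlay U' ρ) (hU : U' ⊆ U) :
    G.ValidPlay U ρ :=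
  ⟨fun i => hU (h.1 i), h.2⟩

theorem agrees_of_forall_agreesUpTo {p : Bool} {σ : List V → V → V} {ρ : ℕ → V}
    (h : ∀ n, G.AgreesUpTo p σ ρ n) : G.Agrees p σ ρ :=
  fun i => h (i + 1) i i.lt_succ_self

section Extension

variable {p : Bool} {U D : Set V} {σ : List V → V → V}

/-- Extend by letting `p` follow `σ` and the opponent move anywhere inside `U`. -/
theorem exists_play_extending (hU : G.Subgame U) (hσ : G.Legal p U σ) {ρ : ℕ → V}
    {n : ℕ} (hρ : G.ValidPrefix U ρ n) (hA : G.AgreesUpTo p σ ρ n) :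
    ∃ ρ', G.ValidPlay U ρ' ∧ G.Agrees p σ ρ' ∧ ∀ i ≤ n, ρ' i = ρ i := by
  set next : List V → V → V := fun l u => if G.owner u = p then σ l u else G.succIn U u
  have hnext : ∀ l u, u ∈ U → G.E u (next l u) ∧ next l u ∈ U := by
    intro l u hu
    by_cases ho : G.owner u = p
    · simpa only [next, if_pos ho] using hσ l u hu ho
    · simpa only [next, if_neg ho] using G.succIn_spec hU hu
  obtain ⟨ρ', hpre, hstep⟩ := exists_extension_of_history ρ n next
  have hhist : ∀ i ≤ n, (List.ofFn fun j : Fin i => ρ' j) = List.ofFn fun j : Fin i => ρ j :=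
    fun i hi => List.ofFn_inj.2 (funext fun j => hpre j (by omega))
  have hmem : ∀ i, ρ' i ∈ U := by
    intro i
    induction i with
    | zero => rw [hpre 0 n.zero_le]; exact hρ.1 0 n.zero_le
    | succ i ih =>
      by_cases hi : i + 1 ≤ n
      · rw [hpre _ hi]; exact hρ.1 _ hi
      · rw [hstep i (by omega)]; exact (hnext _ _ ih).2
  refine ⟨ρ', ⟨hmem, fun i => ?_⟩, fun i ho => ?_, hpre⟩
  · by_cases hi : i < n
    · rw [hpre i hi.le, hpre (i + 1) hi]; exact hρ.2 i hi
    · rw [hstep i (by omega)]; exact (hnext _ _ (hmem i)).1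
  · by_cases hi : i < n
    · rw [hpre i hi.le] at ho ⊢
      rw [hpre (i + 1) hi, hhist i hi.le]
      exact hA i hi ho
    · rw [hstep i (by omega)]; exact if_pos ho

theorem mem_of_prefix (hU : G.Subgame U) (hσ : G.Legal p U σ) {v : V}
    (hwin : ∀ ρ : ℕ → V, ρ 0 = v → G.ValidPlay U ρ → G.Agrees p σ ρ → ∀ i, ρ i ∈ D)
    {ρ : ℕ → V} {n : ℕ} (h0 : ρ 0 = v) (hρ : G.ValidPrefix U ρ n)
    (hA : G.AgreesUpTo p σ ρ n) : ρ n ∈ D := by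
  obtain ⟨ρ', hplay, hagree, hpre⟩ := exists_play_extending hU hσ hρ hA
  rw [← hpre n le_rfl]
  exact hwin ρ' (by rw [hpre 0 n.zero_le, h0]) hplay hagree n

theorem move_mem_of_prefix (hU : G.Subgame U) (hσ : G.Legal p U σ) {v : V}
    (hwin : ∀ ρ : ℕ → V, ρ 0 = v → G.ValidPlay U ρ → G.Agrees p σ ρ → ∀ i, ρ i ∈ D)
    {ρ : ℕ → V} {n : ℕ} (h0 : ρ 0 = v) (hρ : G.ValidPrefix U ρ n)
    (hA : G.AgreesUpTo p σ ρ n) (ho : G.owner (ρ n) = p) :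
    σ (List.ofFn fun j : Fin n => ρ j) (ρ n) ∈ D := by
  obtain ⟨ρ', hplay, hagree, hpre⟩ := exists_play_extending hU hσ hρ hA
  have hmove := hagree n (by rwa [hpre n le_rfl])
  rw [hpre n le_rfl, List.ofFn_inj.2 (funext fun j => hpre j (by omega))] at hmove
  rw [← hmove]
  exact hwin ρ' (by rw [hpre 0 n.zero_le, h0]) hplay hagree (n + 1)

end Extension

section Dominion

variable {π : V → ℕ} {p : Bool} {U D X : Set V}

theorem Dominion.inter_attr_eq_empty (hU : G.Subgame U) (hD : G.Dominion π p U D)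
    (hdisj : D ∩ X = ∅) : D ∩ G.attr (!p) U X = ∅ := by
  suffices h : ∀ v, G.AttrIn (!p) U X v → v ∉ D from
    Set.eq_empty_iff_forall_notMem.2 fun v hv => h v hv.2 hv.1
  intro v hv hvD
  induction hv with
  | base _ hvX => exact hdisj.subset ⟨hvD, hvX⟩
  | @own v w hvU hown hE hwU _ ih =>
    obtain ⟨σ, hσ, hwin⟩ := hD.2 v hvD
    refine ih (mem_of_prefix (ρ := fun i => if i = 0 then v else w) (n := 1) hU hσ
      (fun ρ h0 hρ hA => (hwin ρ h0 hρ hA).1) rfl ⟨?_, ?_⟩ ?_)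
    · intro i hi; interval_cases i <;> simpa
    · intro i hi; interval_cases i; simpa using hE
    · intro i hi ho; interval_cases i; simp_all
  | @opp v hvU hown _ ih =>
    obtain ⟨σ, hσ, hwin⟩ := hD.2 v hvD
    have ho : G.owner v = p := by simpa using hown
    obtain ⟨hE, hwU⟩ := hσ [] v hvU ho
    have hmove := move_mem_of_prefix (ρ := fun _ => v) (n := 0) hU hσ
      (fun ρ h0 hρ hA => (hwin ρ h0 hρ hA).1) rfl ⟨fun _ _ => hvU, nofun⟩ nofun ho
    exact ih _ hE hwU hmove

theorem subgame_diff_attr (hU : G.Subgame U) : G.Subgame (U \ G.attr (!p) U X) := by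
  rintro u ⟨huU, huA⟩
  by_cases ho : G.owner u = !p
  · obtain ⟨w, hE, hwU⟩ := hU u huU
    exact ⟨w, hE, hwU, fun hw => huA (.own huU ho hE hwU hw)⟩
  · by_contra! hc
    exact huA (.opp huU ho fun w hE hwU => by_contra fun hw => hc w hE ⟨hwU, hw⟩)

variable (G) in
open Classical in
noncomputable def redirect (U' : Set V) (σ : List V → V → V) : List V → V → V :=
  fun l u => if σ l u ∈ U' then σ l u else G.succIn U' u

theorem Legal.redirect {U' : Set V} {σ : List V → V → V} (hσ : G.Legal p U σ)
    (hU' : G.Subgame U') (hU'U : U' ⊆ U) : G.Legal p U' (G.redirect U' σ) := by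
  intro l u hu ho
  by_cases h : σ l u ∈ U'
  · simp only [GameGraph.redirect, if_pos h]; exact ⟨(hσ l u (hU'U hu) ho).1, h⟩
  · simp only [GameGraph.redirect, if_neg h]; exact G.succIn_spec hU' hu

theorem Dominion.restrict {U' : Set V} (hU : G.Subgame U) (hU' : G.Subgame U')
    (hU'U : U' ⊆ U) (hD : G.Dominion π p U D) (hDU' : D ⊆ U') : G.Dominion π p U' D := by
  refine ⟨hDU', fun v hv => ?_⟩
  obtain ⟨σ, hσ, hwin⟩ := hD.2 v hv
  refine ⟨G.redirect U' σ, hσ.redirect hU' hU'U, fun ρ h0 hρ hA => ?_⟩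
  have hρU := hρ.mono hU'U
  refine hwin ρ h0 hρU (agrees_of_forall_agreesUpTo fun n => ?_)
  induction n with
  | zero => nofun
  | succ n ih =>
    intro i hi ho
    rcases Nat.lt_succ_iff_lt_or_eq.1 hi with hi | rfl
    · exact ih i hi ho
    · have hmove := move_mem_of_prefix hU hσ (fun ρ h0 hρ hA => (hwin ρ h0 hρ hA).1) h0
        (hρU.validPrefix i) ih ho
      rw [hA i ho]
      exact if_pos (hDU' hmove)

end Dominion

theorem dominion_of_attr_disjoint_general (G : GameGraph V) (π : V → ℕ) (p : Bool)
    (U D X : Set V) (hU : G.Subgame U) (hD : G.Dominion π p U D)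
    (hdisj : D ∩ X = ∅) :
    G.Dominion π p (U \ G.attr (!p) U X) D ∧ D ∩ G.attr (!p) U X = ∅ := by
  have hinter := hD.inter_attr_eq_empty hU hdisj
  have hDsub : D ⊆ U \ G.attr (!p) U X :=
    fun v hv => ⟨hD.1 hv, fun ha => hinter.subset ⟨hv, ha⟩⟩
  exact ⟨hD.restrict hU (G.subgame_diff_attr hU) Set.sdiff_subset hDsub, hinter⟩

/-- Lemma 1: if a dominion `D` of player `p` in a subgame `U` does not
intersect `X ⊆ U`, then `D` is also a dominion of `p` in
`U \ Attr_{p̄}(X, U)`; in particular `D` does not intersect the attractor. -/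
theorem dominion_of_attr_disjoint (G : GameGraph V) (π : V → ℕ) (p : Bool)
    (U D X : Set V) (hU : G.Subgame U) (hD : G.Dominion π p U D)
    (hX : X ⊆ U) (hdisj : D ∩ X = ∅) :
    G.Dominion π p (U \ G.attr (!p) U X) D ∧ D ∩ G.attr (!p) U X = ∅ :=
  dominion_of_attr_disjoint_general G π p U D X hU hD hdisj

end GameGraph
end

section
/- Let D be a dominion of player p in a subgame G, and let X ⊆ G be p̄-closed in G. Then D ∩ X is a dominion of player p in the subgame induced by X. -/
namespace GameGraph

variable {V : Type*} [Fintype V]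

/-- Lemma 2: if `D` is a dominion of player `p` in a subgame `U` and `X ⊆ U`
is `p̄`-closed in `U`, then `D ∩ X` is a dominion of `p` in the subgame
induced by `X`. -/
theorem dominion_inter_closed (G : GameGraph V) (π : V → ℕ) (p : Bool)
    (U D X : Set V) (hU : G.Subgame U) (hD : G.Dominion π p U D)
    (hX : X ⊆ U) (hclosed : G.Closed (!p) U X) :
    G.Dominion π p X (D ∩ X) := by
  unfold Closed at hclosed
  rw [Bool.not_not] at hclosed
  -- key: a p-vertex in X cannot move (within U) outside X
  have key : ∀ v w, v ∈ X → G.owner v = p → G.E v w → w ∈ U → w ∈ X := by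
    intro v w hvX hown he hwU
    by_contra hwX
    have hw : G.AttrIn p U (U \ X) w := AttrIn.base hwU ⟨hwU, hwX⟩
    have hv : G.AttrIn p U (U \ X) v := AttrIn.own (hX hvX) hown he hwU hw
    have : v ∈ U \ X := hclosed ▸ hv
    exact this.2 hvX
  constructor
  · exact fun v hv => hv.2
  · intro v hv
    obtain ⟨σ, hleg, hwin⟩ := hD.2 v hv.1
    refine ⟨σ, ?_, ?_⟩
    · intro l w hwX hown
      obtain ⟨he, hU'⟩ := hleg l w (hX hwX) hown
      exact ⟨he, key w _ hwX hown he hU'⟩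
    · intro ρ h0 hvalid hagr
      have hvalidU : G.ValidPlay U ρ := ⟨fun i => hX (hvalid.1 i), hvalid.2⟩
      obtain ⟨hmem, hw⟩ := hwin ρ h0 hvalidU hagr
      exact ⟨fun i => ⟨hmem i, hvalid.1 i⟩, hw⟩

end GameGraph
end

section
/- Let D be a non-empty dominion of player p in a parity game in which all priorities are at most d′, where d′ has the parity of the opponent p̄. Then D contains a non-empty subset C that is a dominion of p and contains no vertex of priority d′. -/
namespace GameGraph

variable {V : Type*} [Fintype V]

-- === auxiliary development ===

noncomputable def nextV (G : GameGraph V) (p : Bool) (σ : List V → V → V)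
    (l : List V) (v : V) : V :=
  if G.owner v = p then σ l v else (G.exists_succ v).choose

lemma nextV_edge (G : GameGraph V) (p : Bool) (σ : List V → V → V)
    (hσ : G.Legal p Set.univ σ) (l : List V) (v : V) : G.E v (G.nextV p σ l v) := by
  unfold nextV
  split
  · exact (hσ l v (Set.mem_univ v) (by assumption)).1
  · exact (G.exists_succ v).choose_spec

noncomputable def playAux (G : GameGraph V) (p : Bool) (σ : List V → V → V)
    (v : V) : ℕ → V × List V
  | 0 => (v, [])
  | n+1 => (G.nextV p σ (G.playAux p σ v n).2 (G.playAux p σ v n).1,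
      (G.playAux p σ v n).2 ++ [(G.playAux p σ v n).1])

noncomputable def thePlay (G : GameGraph V) (p : Bool) (σ : List V → V → V)
    (v : V) (n : ℕ) : V := (G.playAux p σ v n).1

lemma playAux_snd (G : GameGraph V) (p : Bool) (σ : List V → V → V) (v : V) (n : ℕ) :
    (G.playAux p σ v n).2 = List.ofFn fun j : Fin n => G.thePlay p σ v j := by
  induction n with
  | zero => simp [playAux]
  | succ n ih =>
    rw [List.ofFn_succ']
    simp only [playAux, ih, List.concat_eq_append, Fin.coe_castSucc, Fin.val_last]
    rfl

lemma thePlay_spec (G : GameGraph V) (p : Bool) (σ : List V → V → V)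
    (hσ : G.Legal p Set.univ σ) (v : V) :
    G.thePlay p σ v 0 = v ∧ G.ValidPlay Set.univ (G.thePlay p σ v) ∧
      G.Agrees p σ (G.thePlay p σ v) := by
  refine ⟨rfl, ⟨fun _ => trivial, fun i => ?_⟩, fun i hi => ?_⟩
  · exact G.nextV_edge p σ hσ _ _
  · show (G.playAux p σ v (i+1)).1 = _
    simp only [playAux, nextV]
    simp only [thePlay] at hi
    rw [if_pos hi, playAux_snd]
    rfl


def glue (ρ : ℕ → V) (n : ℕ) (τ : ℕ → V) (j : ℕ) : V :=
  if j < n then ρ j else τ (j - n)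

lemma glue_ge (ρ : ℕ → V) (n : ℕ) (τ : ℕ → V) (j : ℕ) (hj : n ≤ j) :
    glue ρ n τ j = τ (j - n) := if_neg (by omega)

lemma ofFn_glue (ρ τ : ℕ → V) (n i : ℕ) (hn : n ≤ i) :
    (List.ofFn fun j : Fin i => glue ρ n τ j) =
      (List.ofFn fun j : Fin n => ρ j) ++ List.ofFn fun j : Fin (i - n) => τ j := by
  obtain ⟨k, rfl⟩ := Nat.exists_eq_add_of_le hn
  rw [show n + k - n = k by omega, List.ofFn_add]
  congr 1
  · refine congrArg List.ofFn (funext fun j => ?_)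
    simp [glue, j.isLt]
  · refine congrArg List.ofFn (funext fun j => ?_)
    simp only [glue, Fin.coe_natAdd]
    rw [if_neg (by omega), Nat.add_sub_cancel_left]

lemma glue_spec (G : GameGraph V) (p : Bool) (σ : List V → V → V)
    (ρ : ℕ → V) (hv : G.ValidPlay Set.univ ρ) (ha : G.Agrees p σ ρ) (n : ℕ)
    (τ : ℕ → V) (hτ0 : τ 0 = ρ n) (hτv : G.ValidPlay Set.univ τ)
    (hτa : G.Agrees p (fun l u => σ ((List.ofFn fun j : Fin n => ρ j) ++ l) u) τ) :
    (∀ j, j ≤ n → glue ρ n τ j = ρ j) ∧ G.ValidPlay Set.univ (glue ρ n τ) ∧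
      G.Agrees p σ (glue ρ n τ) := by
  have hmatch : ∀ j, j ≤ n → glue ρ n τ j = ρ j := by
    intro j hj
    by_cases h : j < n
    · exact if_pos h
    · have : j = n := by omega
      subst this
      rw [glue_ge ρ j τ j le_rfl, Nat.sub_self, hτ0]
  refine ⟨hmatch, ⟨fun _ => trivial, fun i => ?_⟩, fun i hi => ?_⟩
  · by_cases h : i < n
    · rw [hmatch i (by omega), hmatch (i+1) (by omega)]
      exact hv.2 i
    · rw [glue_ge ρ n τ i (by omega), glue_ge ρ n τ (i+1) (by omega),
        show i + 1 - n = (i - n) + 1 by omega]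
      exact hτv.2 (i - n)
  · by_cases h : i < n
    · rw [hmatch (i+1) (by omega)]
      have e1 : glue ρ n τ i = ρ i := hmatch i (by omega)
      rw [e1] at hi
      rw [ha i hi, e1]
      congr 1
      exact congrArg List.ofFn (funext fun j => (hmatch j (by omega)).symm)
    · have e1 : glue ρ n τ i = τ (i - n) := glue_ge ρ n τ i (by omega)
      rw [e1] at hi
      rw [glue_ge ρ n τ (i+1) (by omega), show i + 1 - n = (i - n) + 1 by omega,
        hτa (i - n) hi, ofFn_glue ρ τ n i (by omega), e1]

lemma infOcc_glue (π : V → ℕ) (ρ' τ : ℕ → V) (n : ℕ)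
    (h : ∀ j, n ≤ j → ρ' j = τ (j - n)) (c : ℕ) :
    InfOcc π ρ' c ↔ InfOcc π τ c := by
  constructor
  · intro H N
    obtain ⟨i, hi, hc⟩ := H (N + n)
    exact ⟨i - n, by omega, by rw [← h i (by omega)]; exact hc⟩
  · intro H N
    obtain ⟨i, hi, hc⟩ := H N
    refine ⟨n + i, by omega, ?_⟩
    rw [h (n + i) (by omega), Nat.add_sub_cancel_left]
    exact hc

lemma winsPlay_glue (π : V → ℕ) (p : Bool) (ρ' τ : ℕ → V) (n : ℕ)
    (h : ∀ j, n ≤ j → ρ' j = τ (j - n)) (hw : WinsPlay π p ρ') : WinsPlay π p τ := by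
  obtain ⟨c, hc, hcp, hcm⟩ := hw
  exact ⟨c, (infOcc_glue π ρ' τ n h c).1 hc, hcp,
    fun c' hc' => hcm c' ((infOcc_glue π ρ' τ n h c').2 hc')⟩

abbrev GoodPlay (G : GameGraph V) (p : Bool) (σ : List V → V → V) (v0 : V) : Type _ :=
  {x : (ℕ → V) × ℕ // x.1 0 = v0 ∧ G.ValidPlay Set.univ x.1 ∧ G.Agrees p σ x.1}

lemma exists_avoid (G : GameGraph V) (π : V → ℕ) (p : Bool) (d' : ℕ)
    (hpri : ∀ v, π v ≤ d') (hpar : ¬((d' % 2 = 0) ↔ p = true))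
    (σ : List V → V → V) (hσ : G.Legal p Set.univ σ) (v0 : V)
    (hwin : ∀ ρ : ℕ → V, ρ 0 = v0 → G.ValidPlay Set.univ ρ → G.Agrees p σ ρ →
      WinsPlay π p ρ) :
    ∃ ρ : ℕ → V, ρ 0 = v0 ∧ G.ValidPlay Set.univ ρ ∧ G.Agrees p σ ρ ∧
      ∃ n : ℕ, ∀ ρ' : ℕ → V, ρ' 0 = v0 → G.ValidPlay Set.univ ρ' →
        G.Agrees p σ ρ' → (∀ j, j ≤ n → ρ' j = ρ j) →
        ∀ m, n ≤ m → π (ρ' m) ≠ d' := by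
  by_contra hcon
  push_neg at hcon
  have hstep : ∀ x : G.GoodPlay p σ v0, ∃ y : G.GoodPlay p σ v0,
      (∀ j, j ≤ x.1.2 → y.1.1 j = x.1.1 j) ∧ x.1.2 < y.1.2 ∧
        π (y.1.1 (y.1.2 - 1)) = d' ∧ x.1.2 ≤ y.1.2 - 1 := by
    rintro ⟨⟨ρ, n⟩, h0, hv, ha⟩
    obtain ⟨ρ', h0', hv', ha', hmatch, m, hm, hπm⟩ := hcon ρ h0 hv ha n
    refine ⟨⟨⟨ρ', m + 1⟩, h0', hv', ha'⟩, hmatch, ?_, ?_, ?_⟩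
    · show n < m + 1
      omega
    · show π (ρ' (m + 1 - 1)) = d'
      simpa using hπm
    · show n ≤ m + 1 - 1
      omega
  choose next hnext using hstep
  have hspec := G.thePlay_spec p σ hσ v0
  set x0 : G.GoodPlay p σ v0 := ⟨⟨G.thePlay p σ v0, 0⟩, hspec.1, hspec.2.1, hspec.2.2⟩ with hx0
  set s : ℕ → G.GoodPlay p σ v0 := fun k => next^[k] x0 with hsdef
  have hs_succ : ∀ k, s (k+1) = next (s k) := fun k => Function.iterate_succ_apply' next k x0
  have hmono : ∀ k, (s k).1.2 < (s (k+1)).1.2 := fun k => by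
    rw [hs_succ]; exact (hnext (s k)).2.1
  have hk_le : ∀ k, k ≤ (s k).1.2 := by
    intro k
    induction k with
    | zero => exact Nat.zero_le _
    | succ k ih => have := hmono k; omega
  have hmono' : ∀ k l, k ≤ l → (s k).1.2 ≤ (s l).1.2 :=
    fun k l h => monotone_nat_of_le_succ (fun j => (hmono j).le) h
  have hagree : ∀ k l, k ≤ l → ∀ j, j ≤ (s k).1.2 → (s l).1.1 j = (s k).1.1 j := by
    intro k l hkl
    induction l with
    | zero =>
      intro j hj
      have : k = 0 := Nat.le_zero.mp hkl
      subst this; rfl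
    | succ l ih =>
      intro j hj
      by_cases h : k ≤ l
      · rw [hs_succ, (hnext (s l)).1 j (le_trans hj (hmono' k l h))]
        exact ih h j hj
      · have : k = l + 1 := by omega
        subst this; rfl
  set ρL : ℕ → V := fun j => (s j).1.1 j with hρL
  have hstable : ∀ k j, j ≤ (s k).1.2 → (s k).1.1 j = ρL j := by
    intro k j hj
    by_cases h : j ≤ k
    · exact hagree j k h j (hk_le j)
    · exact (hagree k j (by omega) j hj).symm
  have hL0 : ρL 0 = v0 := by
    have h1 : (s 0).1.1 0 = ρL 0 := hstable 0 0 (Nat.zero_le _)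
    rw [← h1]
    exact (s 0).2.1
  have hLv : G.ValidPlay Set.univ ρL := by
    refine ⟨fun _ => trivial, fun i => ?_⟩
    have h1 := hstable (i+1) i (le_trans (Nat.le_succ i) (hk_le (i+1)))
    have h2 := hstable (i+1) (i+1) (hk_le (i+1))
    have h3 := (s (i+1)).2.2.1.2 i
    rwa [h1, h2] at h3
  have hLa : G.Agrees p σ ρL := by
    intro i hip
    have h1 := hstable (i+1) i (le_trans (Nat.le_succ i) (hk_le (i+1)))
    have h2 := hstable (i+1) (i+1) (hk_le (i+1))
    have ha' := (s (i+1)).2.2.2 i (by rw [h1]; exact hip)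
    rw [h1, h2] at ha'
    rw [ha']
    congr 1
    exact congrArg List.ofFn (funext fun j =>
      hstable (i+1) j (le_trans (le_of_lt (lt_of_lt_of_le j.isLt (Nat.le_succ i)))
        (hk_le (i+1))))
  have hInf : InfOcc π ρL d' := by
    intro N
    have hy := hnext (s N)
    rw [← hs_succ N] at hy
    refine ⟨(s (N+1)).1.2 - 1, ?_, ?_⟩
    · have h1 := hy.2.2.2
      have h2 := hk_le N
      omega
    · rw [← hstable (N+1) _ (by omega)]
      exact hy.2.2.1
  obtain ⟨c, hc, hcp, hcm⟩ := hwin ρL hL0 hLv hLa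
  have h1 : d' ≤ c := hcm d' hInf
  obtain ⟨i, -, hi⟩ := hc 0
  have h2 : c ≤ d' := by rw [← hi]; exact hpri (ρL i)
  have hcd : c = d' := le_antisymm h2 h1
  subst hcd
  exact hpar hcp

lemma shift_mem (G : GameGraph V) (π : V → ℕ) (p : Bool) (d' : ℕ) (D : Set V)
    (σ : List V → V → V) (hσ : G.Legal p Set.univ σ)
    (ρ : ℕ → V) (hv : G.ValidPlay Set.univ ρ) (ha : G.Agrees p σ ρ) (n : ℕ)
    (H : ∀ ρ' : ℕ → V, ρ' 0 = ρ 0 → G.ValidPlay Set.univ ρ' → G.Agrees p σ ρ' →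
      (∀ j, j ≤ n → ρ' j = ρ j) →
      (∀ m, ρ' m ∈ D) ∧ WinsPlay π p ρ' ∧ ∀ m, n ≤ m → π (ρ' m) ≠ d') :
    ∃ σ' : List V → V → V, G.Legal p Set.univ σ' ∧
      ∀ τ : ℕ → V, τ 0 = ρ n → G.ValidPlay Set.univ τ → G.Agrees p σ' τ →
        (∀ i, τ i ∈ D) ∧ WinsPlay π p τ ∧ ∀ i, π (τ i) ≠ d' := by
  refine ⟨fun l u => σ ((List.ofFn fun j : Fin n => ρ j) ++ l) u,
    fun l v hv' hp => hσ _ v hv' hp, ?_⟩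
  intro τ hτ0 hτv hτa
  obtain ⟨gmatch, gval, gagr⟩ := G.glue_spec p σ ρ hv ha n τ hτ0 hτv hτa
  have g0 : glue ρ n τ 0 = ρ 0 := gmatch 0 (Nat.zero_le n)
  obtain ⟨hd, hw, hnd⟩ := H _ g0 gval gagr gmatch
  have hge : ∀ j, n ≤ j → glue ρ n τ j = τ (j - n) := fun j hj => glue_ge ρ n τ j hj
  refine ⟨fun i => ?_, winsPlay_glue π p _ τ n hge hw, fun i => ?_⟩
  · have := hd (n + i)
    rwa [hge (n + i) (by omega), Nat.add_sub_cancel_left] at this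
  · have := hnd (n + i) (by omega)
    rwa [hge (n + i) (by omega), Nat.add_sub_cancel_left] at this


/-- Lemma 3: if all priorities in the game are at most `d'`, where `d'` has
the parity of the opponent of `p`, then every non-empty dominion `D` of `p`
contains a non-empty sub-dominion `C` without vertices of priority `d'`. -/
theorem dominion_avoid_top_priority (G : GameGraph V) (π : V → ℕ) (p : Bool)
    (d' : ℕ) (D : Set V) (hpri : ∀ v : V, π v ≤ d')
    (hpar : ¬((d' % 2 = 0) ↔ p = true))
    (hD : G.Dominion π p Set.univ D) (hne : D.Nonempty) :
    ∃ C : Set V, C.Nonempty ∧ C ⊆ D ∧ G.Dominion π p Set.univ C ∧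
      ∀ v ∈ C, π v ≠ d' := by
  obtain ⟨v0, hv0⟩ := hne
  obtain ⟨σ, hleg, hwin⟩ := hD.2 v0 hv0
  obtain ⟨ρ, h0, hval, hagr, n, hP⟩ := G.exists_avoid π p d' hpri hpar σ hleg v0
      fun ρ' h0' hv' ha' => (hwin ρ' h0' hv' ha').2
  have hkey : ∀ w : V, (∃ σ' : List V → V → V, G.Legal p Set.univ σ' ∧
      ∀ τ : ℕ → V, τ 0 = w → G.ValidPlay Set.univ τ → G.Agrees p σ' τ →
        (∀ i, τ i ∈ D) ∧ WinsPlay π p τ ∧ ∀ i, π (τ i) ≠ d') →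
      w ∈ D ∧ π w ≠ d' := by
    rintro w ⟨σ', hl', hprop⟩
    obtain ⟨t0, tval, tagr⟩ := G.thePlay_spec p σ' hl' w
    obtain ⟨hd, -, hnd⟩ := hprop _ t0 tval tagr
    exact ⟨t0 ▸ hd 0, t0 ▸ hnd 0⟩
  refine ⟨{w | ∃ σ' : List V → V → V, G.Legal p Set.univ σ' ∧
    ∀ τ : ℕ → V, τ 0 = w → G.ValidPlay Set.univ τ → G.Agrees p σ' τ →
      (∀ i, τ i ∈ D) ∧ WinsPlay π p τ ∧ ∀ i, π (τ i) ≠ d'},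
    ⟨ρ n, ?_⟩, fun w hw => (hkey w hw).1, ⟨fun _ _ => trivial, ?_⟩,
    fun w hw => (hkey w hw).2⟩
  · exact G.shift_mem π p d' D σ hleg ρ hval hagr n fun ρ' h0' hv' ha' hm =>
      ⟨(hwin ρ' (h0'.trans h0) hv' ha').1, (hwin ρ' (h0'.trans h0) hv' ha').2,
        hP ρ' (h0'.trans h0) hv' ha' hm⟩
  · rintro w ⟨σ', hl', hprop⟩
    refine ⟨σ', hl', fun τ h0' hv' ha' => ⟨fun i => ?_, (hprop τ h0' hv' ha').2.1⟩⟩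
    exact G.shift_mem π p d' D σ' hl' τ hv' ha' i fun μ h0'' hv'' ha'' _ =>
      ⟨(hprop μ (h0''.trans h0') hv'' ha'').1, (hprop μ (h0''.trans h0') hv'' ha'').2.1,
        fun m _ => (hprop μ (h0''.trans h0') hv'' ha'').2.2 m⟩


end GameGraph
end

section
/- The winning region of player p in a parity game is a dominion of player p (in the whole game). -/
namespace GameGraph

variable {V : Type*} [Fintype V]

/-- The winning region of player `p` in a parity game is a dominion of `p`
in the whole game. -/
theorem winRegion_dominion (G : GameGraph V) (π : V → ℕ) (p : Bool) :
    G.Dominion π p Set.univ (G.WinRegion π p) := by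
  refine ⟨Set.subset_univ _, fun v hv => ?_⟩
  obtain ⟨σ, hleg, hwin⟩ := hv
  refine ⟨σ, hleg, fun ρ h0 hval hagr => ⟨fun i => ?_, hwin ρ h0 hval hagr⟩⟩
  -- show ρ i ∈ WinRegion: use strategy σ with history prefixed by ρ 0 .. ρ (i-1)
  refine ⟨fun l w => σ ((List.ofFn fun j : Fin i => ρ j) ++ l) w,
    fun l w _ hw => hleg _ w trivial hw, fun ρ' h0' hval' hagr' => ?_⟩
  -- build the concatenated play
  set ρ'' : ℕ → V := fun n => if n < i then ρ n else ρ' (n - i) with hρ''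
  have hlt : ∀ n, n < i → ρ'' n = ρ n := fun n hn => if_pos hn
  have hge : ∀ k, ρ'' (i + k) = ρ' k := by
    intro k
    simp only [hρ'', if_neg (by omega : ¬ i + k < i), Nat.add_sub_cancel_left]
  have hle : ∀ n, n ≤ i → ρ'' n = ρ n := by
    intro n hn
    rcases lt_or_eq_of_le hn with h | h
    · exact hlt n h
    · subst h
      have := hge 0
      simp only [Nat.add_zero] at this
      rw [this, h0']
  have h0'' : ρ'' 0 = v := by rw [hle 0 (Nat.zero_le _), h0]
  have hval'' : G.ValidPlay Set.univ ρ'' := by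
    refine ⟨fun _ => trivial, fun n => ?_⟩
    rcases lt_or_ge (n + 1) i with h | h
    · rw [hlt n (by omega), hlt (n + 1) h]; exact hval.2 n
    · rcases lt_or_ge n i with h2 | h2
      · have hni : n + 1 = i := by omega
        rw [hlt n h2, hle (n + 1) (by omega), hni]
        have := hval.2 n
        rwa [hni] at this
      · obtain ⟨k, rfl⟩ : ∃ k, n = i + k := ⟨n - i, by omega⟩
        rw [hge k, show i + k + 1 = i + (k + 1) by omega, hge (k + 1)]
        exact hval'.2 k
  have hagr'' : G.Agrees p σ ρ'' := by
    intro n hn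
    rcases lt_or_ge n i with h | h
    · have e1 : ρ'' n = ρ n := hlt n h
      have e2 : ρ'' (n + 1) = ρ (n + 1) := hle (n + 1) (by omega)
      have e3 : (List.ofFn fun j : Fin n => ρ'' j) = List.ofFn fun j : Fin n => ρ j := by
        congr 1
        funext j
        exact hlt j (by omega)
      rw [e1, e2, e3]
      exact hagr n (by rwa [e1] at hn)
    · obtain ⟨k, rfl⟩ : ∃ k, n = i + k := ⟨n - i, by omega⟩
      have e1 : ρ'' (i + k) = ρ' k := hge k
      have e2 : ρ'' (i + k + 1) = ρ' (k + 1) := by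
        rw [show i + k + 1 = i + (k + 1) by omega]; exact hge (k + 1)
      have e3 : (List.ofFn fun j : Fin (i + k) => ρ'' j)
          = (List.ofFn fun j : Fin i => ρ j) ++ List.ofFn fun j : Fin k => ρ' j := by
        rw [List.ofFn_add]
        congr 1
        · exact congrArg List.ofFn (funext fun j => hlt j.val j.isLt)
        · exact congrArg List.ofFn (funext fun j => hge j.val)
      rw [e1, e2, e3]
      exact hagr' k (by rwa [e1] at hn)
  have hw'' : WinsPlay π p ρ'' := hwin ρ'' h0'' hval'' hagr''
  -- transfer winning from ρ'' to ρ'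
  have hioc : ∀ c, InfOcc π ρ'' c ↔ InfOcc π ρ' c := by
    intro c
    constructor
    · intro h N
      obtain ⟨j, hj, hc⟩ := h (N + i)
      obtain ⟨m, rfl⟩ : ∃ m, j = i + m := ⟨j - i, by omega⟩
      refine ⟨m, by omega, ?_⟩
      rwa [hge m] at hc
    · intro h N
      obtain ⟨j, hj, hc⟩ := h N
      exact ⟨i + j, by omega, by rw [hge j]; exact hc⟩
  obtain ⟨c, hc1, hc2, hc3⟩ := hw''
  exact ⟨c, (hioc c).mp hc1, hc2, fun c' hc' => hc3 c' ((hioc c').mpr hc')⟩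

end GameGraph
end

section
/- In a game graph, if player p has a strategy from vertex v that agrees only with plays reaching a set S (i.e., v ∈ Attr_p(S)), and p has, from every vertex of S, a winning strategy staying in a set D ⊇ S, then p has a winning strategy from v agreeing only with plays staying in Attr_p(S) ∪ D. -/
namespace GameGraph

variable {V : Type*} [Fintype V]

/-! ### Auxiliary development for the composition theorem -/

/-- Step-indexed approximation of the attractor (in the full game). -/
def ladder (G : GameGraph V) (p : Bool) (S : Set V) : ℕ → Set V
  | 0 => S
  | n+1 => ladder G p S n ∪ {v | (G.owner v = p ∧ ∃ w, G.E v w ∧ w ∈ ladder G p S n) ∨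
      (G.owner v ≠ p ∧ ∀ w, G.E v w → w ∈ ladder G p S n)}

lemma ladder_mono (G : GameGraph V) (p : Bool) (S : Set V) {m n : ℕ} (h : m ≤ n) :
    ladder G p S m ⊆ ladder G p S n := by
  induction h with
  | refl => exact subset_rfl
  | step _ ih => exact ih.trans (fun v hv => Or.inl hv)

lemma ladder_attr (G : GameGraph V) (p : Bool) (S : Set V) :
    ∀ n, ∀ v ∈ ladder G p S n, G.AttrIn p Set.univ S v := by
  intro n
  induction n with
  | zero => exact fun v hv => AttrIn.base (Set.mem_univ v) hv
  | succ n ih =>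
    rintro v (hv | hv)
    · exact ih v hv
    · rcases hv with ⟨ho, w, hew, hw⟩ | ⟨ho, hall⟩
      · exact AttrIn.own (Set.mem_univ v) ho hew (Set.mem_univ w) (ih w hw)
      · exact AttrIn.opp (Set.mem_univ v) ho (fun w hw _ => ih w (hall w hw))

lemma attr_ladder (G : GameGraph V) (p : Bool) (S : Set V) {v : V}
    (h : G.AttrIn p Set.univ S v) : ∃ n, v ∈ ladder G p S n := by
  classical
  induction h with
  | base _ hS => exact ⟨0, hS⟩
  | own _ ho he _ _ ih =>
    obtain ⟨n, hn⟩ := ih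
    exact ⟨n + 1, Or.inr (Or.inl ⟨ho, _, he, hn⟩)⟩
  | @opp v _ ho _ ih =>
    have ih' : ∀ w, G.E v w → ∃ n, w ∈ ladder G p S n :=
      fun w hw => ih w hw (Set.mem_univ w)
    set F : V → ℕ := fun w => if hw : G.E v w then (ih' w hw).choose else 0 with hF
    refine ⟨(Finset.univ.sup F) + 1, Or.inr (Or.inr ⟨ho, fun w hw => ?_⟩)⟩
    have h1 : w ∈ ladder G p S (F w) := by
      simp only [hF, dif_pos hw]
      exact (ih' w hw).choose_spec
    exact ladder_mono G p S (Finset.le_sup (Finset.mem_univ w)) h1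

open Classical in
/-- Rank of a vertex in the attractor. -/
noncomputable def rank (G : GameGraph V) (p : Bool) (S : Set V) (v : V) : ℕ :=
  if h : ∃ n, v ∈ ladder G p S n then Nat.find h else 0

lemma mem_ladder_rank (G : GameGraph V) (p : Bool) (S : Set V) {v : V}
    (h : G.AttrIn p Set.univ S v) : v ∈ ladder G p S (rank G p S v) := by
  classical
  have h' := attr_ladder G p S h
  rw [rank, dif_pos h']
  exact Nat.find_spec h'

lemma rank_le (G : GameGraph V) (p : Bool) (S : Set V) {v : V} {n : ℕ}
    (h : v ∈ ladder G p S n) : rank G p S v ≤ n := by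
  classical
  rw [rank, dif_pos ⟨n, h⟩]
  exact Nat.find_le h

lemma rank_zero_mem (G : GameGraph V) (p : Bool) (S : Set V) {v : V}
    (h : G.AttrIn p Set.univ S v) (h0 : rank G p S v = 0) : v ∈ S := by
  have := mem_ladder_rank G p S h
  rwa [h0] at this

lemma rank_step (G : GameGraph V) (p : Bool) (S : Set V) {v : V}
    (h : G.AttrIn p Set.univ S v) (hvS : v ∉ S) :
    (G.owner v = p → ∃ w, G.E v w ∧ G.AttrIn p Set.univ S w ∧ rank G p S w < rank G p S v) ∧
    (G.owner v ≠ p → ∀ w, G.E v w → G.AttrIn p Set.univ S w ∧ rank G p S w < rank G p S v) := by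
  classical
  have hmem := mem_ladder_rank G p S h
  rcases Nat.eq_zero_or_pos (rank G p S v) with h0 | hpos
  · exact absurd (rank_zero_mem G p S h h0) hvS
  obtain ⟨m, hm⟩ := Nat.exists_eq_add_of_lt hpos
  rw [hm, zero_add] at hmem
  have hnot : v ∉ ladder G p S m := by
    intro hvm
    have := rank_le G p S hvm
    omega
  rcases hmem with hvm | hvm
  · exact absurd hvm hnot
  constructor
  · intro ho
    rcases hvm with ⟨_, w, hew, hw⟩ | ⟨ho', _⟩
    · refine ⟨w, hew, ladder_attr G p S m w hw, ?_⟩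
      have := rank_le G p S hw; omega
    · exact absurd ho ho'
  · intro ho
    rcases hvm with ⟨ho', _⟩ | ⟨_, hall⟩
    · exact absurd ho' ho
    · intro w hw
      refine ⟨ladder_attr G p S m w (hall w hw), ?_⟩
      have := rank_le G p S (hall w hw); omega

open Classical in
/-- Attractor strategy move. -/
noncomputable def attrMove (G : GameGraph V) (p : Bool) (S : Set V) (v : V) : V :=
  if h : ∃ w, G.E v w ∧ G.AttrIn p Set.univ S w ∧ rank G p S w < rank G p S v
  then h.choose else (G.exists_succ v).choose

lemma attrMove_edge (G : GameGraph V) (p : Bool) (S : Set V) (v : V) :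
    G.E v (attrMove G p S v) := by
  classical
  rw [attrMove]
  split
  · next h => exact h.choose_spec.1
  · exact (G.exists_succ v).choose_spec

lemma attrMove_spec (G : GameGraph V) (p : Bool) (S : Set V) {v : V}
    (h : G.AttrIn p Set.univ S v) (hvS : v ∉ S) (ho : G.owner v = p) :
    G.AttrIn p Set.univ S (attrMove G p S v) ∧
      rank G p S (attrMove G p S v) < rank G p S v := by
  classical
  have h' := (rank_step G p S h hvS).1 ho
  rw [attrMove, dif_pos h']
  exact ⟨h'.choose_spec.2.1, h'.choose_spec.2.2⟩

lemma getD_hist (ρ : ℕ → V) (i k : ℕ) (hk : k ≤ i) :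
    ((List.ofFn fun j : Fin i => ρ j) ++ [ρ i]).getD k (ρ i) = ρ k := by
  have hlen : ((List.ofFn fun j : Fin i => ρ j) ++ [ρ i]).length = i + 1 := by simp
  rw [List.getD_eq_getElem _ _ (by omega)]
  rcases lt_or_eq_of_le hk with h | h
  · rw [List.getElem_append_left (by simpa using h)]
    simp
  · subst h
    rw [List.getElem_append_right (by simp)]
    simp

lemma drop_hist (ρ : ℕ → V) (i k : ℕ) (hk : k ≤ i) :
    (List.ofFn fun j : Fin i => ρ j).drop k =
      List.ofFn fun j : Fin (i - k) => ρ (k + j) := by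
  apply List.ext_getElem
  · simp
  · intro n h1 h2
    simp only [List.getElem_drop, List.getElem_ofFn]

lemma shift_wins (π : V → ℕ) (p : Bool) (ρ : ℕ → V) (k : ℕ)
    (h : WinsPlay π p (fun j => ρ (k + j))) : WinsPlay π p ρ := by
  obtain ⟨c, hc, hpar, hmax⟩ := h
  have key : ∀ c', InfOcc π (fun j => ρ (k + j)) c' ↔ InfOcc π ρ c' := by
    intro c'
    constructor
    · intro h N
      obtain ⟨i, hi, hπ⟩ := h N
      exact ⟨k + i, by omega, hπ⟩
    · intro h N
      obtain ⟨i, hi, hπ⟩ := h (N + k)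
      refine ⟨i - k, by omega, ?_⟩
      show π (ρ (k + (i - k))) = c'
      have : k + (i - k) = i := by omega
      rw [this]; exact hπ
  exact ⟨c, (key c).1 hc, hpar, fun c' hc' => hmax c' ((key c').2 hc')⟩

open Classical in
/-- The composed strategy: follow the attractor strategy until the play has
visited `S`, then follow the strategy attached to the first vertex of `S`
that was visited. -/
noncomputable def comp (G : GameGraph V) (p : Bool) (S : Set V)
    (T : V → List V → V → V) : List V → V → V := fun l x =>
  if h : ∃ k, k < (l ++ [x]).length ∧ (l ++ [x]).getD k x ∈ S then
    T ((l ++ [x]).getD (Nat.find h) x) (l.drop (Nat.find h)) x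
  else attrMove G p S x

lemma comp_legal (G : GameGraph V) (p : Bool) (S : Set V)
    (T : V → List V → V → V) (hT : ∀ u, G.Legal p Set.univ (T u)) :
    G.Legal p Set.univ (comp G p S T) := by
  classical
  intro l x _ ho
  simp only [comp]
  split
  · exact hT _ _ x (Set.mem_univ x) ho
  · exact ⟨attrMove_edge G p S x, Set.mem_univ _⟩

lemma comp_eval_before (G : GameGraph V) (p : Bool) (S : Set V)
    (T : V → List V → V → V) (ρ : ℕ → V) (i : ℕ) (h : ∀ k ≤ i, ρ k ∉ S) :
    comp G p S T (List.ofFn fun j : Fin i => ρ j) (ρ i) = attrMove G p S (ρ i) := by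
  classical
  rw [comp, dif_neg]
  rintro ⟨k, hk, hkS⟩
  have hlen : ((List.ofFn fun j : Fin i => ρ j) ++ [ρ i]).length = i + 1 := by simp
  rw [hlen] at hk
  have hk' : k ≤ i := by omega
  rw [getD_hist ρ i k hk'] at hkS
  exact h k hk' hkS

lemma comp_eval_after (G : GameGraph V) (p : Bool) (S : Set V)
    (T : V → List V → V → V) (ρ : ℕ → V) (i k₀ : ℕ) (hk₀i : k₀ ≤ i)
    (hk₀ : ρ k₀ ∈ S) (hmin : ∀ j < k₀, ρ j ∉ S) :
    comp G p S T (List.ofFn fun j : Fin i => ρ j) (ρ i)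
      = T (ρ k₀) (List.ofFn fun j : Fin (i - k₀) => ρ (k₀ + j)) (ρ i) := by
  classical
  have hlen : ((List.ofFn fun j : Fin i => ρ j) ++ [ρ i]).length = i + 1 := by simp
  have hcond : ∃ k, k < ((List.ofFn fun j : Fin i => ρ j) ++ [ρ i]).length ∧
      ((List.ofFn fun j : Fin i => ρ j) ++ [ρ i]).getD k (ρ i) ∈ S :=
    ⟨k₀, by rw [hlen]; omega, by rw [getD_hist ρ i k₀ hk₀i]; exact hk₀⟩
  rw [comp, dif_pos hcond]
  have hfind : Nat.find hcond = k₀ := by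
    rw [Nat.find_eq_iff]
    refine ⟨⟨by rw [hlen]; omega, by rw [getD_hist ρ i k₀ hk₀i]; exact hk₀⟩, ?_⟩
    rintro m hm ⟨hm', hmS⟩
    rw [getD_hist ρ i m (by omega)] at hmS
    exact hmin m hm hmS
  rw [hfind, getD_hist ρ i k₀ hk₀i, drop_hist ρ i k₀ hk₀i]

/-- Composition of an attractor strategy with dominion strategies: if
`v ∈ Attr_p S` and from every vertex of `S` player `p` has a winning strategy
staying in `D ⊇ S`, then `p` has a winning strategy from `v` agreeing only
with plays staying in `Attr_p S ∪ D`. -/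
theorem attr_strategy_composition (G : GameGraph V) (π : V → ℕ) (p : Bool)
    (S D : Set V) (hSD : S ⊆ D) (v : V) (hv : v ∈ G.attr p Set.univ S)
    (hS : ∀ u ∈ S, ∃ σ : List V → V → V, G.Legal p Set.univ σ ∧
      ∀ ρ : ℕ → V, ρ 0 = u → G.ValidPlay Set.univ ρ → G.Agrees p σ ρ →
        (∀ i, ρ i ∈ D) ∧ WinsPlay π p ρ) :
    ∃ σ : List V → V → V, G.Legal p Set.univ σ ∧
      ∀ ρ : ℕ → V, ρ 0 = v → G.ValidPlay Set.univ ρ → G.Agrees p σ ρ →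
        (∀ i, ρ i ∈ G.attr p Set.univ S ∪ D) ∧ WinsPlay π p ρ := by
  classical
  choose τ hτleg hτwin using hS
  set T : V → List V → V → V := fun u =>
    if hu : u ∈ S then τ u hu else fun _ x => (G.exists_succ x).choose with hT
  have hTleg : ∀ u, G.Legal p Set.univ (T u) := by
    intro u
    rw [hT]; dsimp only
    split
    · next hu => exact hτleg u hu
    · intro l x _ _; exact ⟨(G.exists_succ x).choose_spec, Set.mem_univ _⟩
  have hTτ : ∀ u (hu : u ∈ S), T u = τ u hu := by
    intro u hu; rw [hT]; dsimp only; rw [dif_pos hu]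
  refine ⟨comp G p S T, comp_legal G p S T hTleg, ?_⟩
  intro ρ hρ0 hval hag
  have hstep : ∀ i, (∀ k ≤ i, ρ k ∉ S) → ρ i ∈ G.attr p Set.univ S →
      ρ (i+1) ∈ G.attr p Set.univ S ∧ rank G p S (ρ (i+1)) < rank G p S (ρ i) := by
    intro i hno hi
    have hiS : ρ i ∉ S := hno i le_rfl
    by_cases ho : G.owner (ρ i) = p
    · have h1 := hag i ho
      rw [comp_eval_before G p S T ρ i hno] at h1
      rw [h1]
      exact attrMove_spec G p S hi hiS ho
    · exact (rank_step G p S hi hiS).2 ho (ρ (i+1)) (hval.2 i)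
  have hattr : ∀ i, (∀ k ≤ i, ρ k ∉ S) → ρ i ∈ G.attr p Set.univ S := by
    intro i
    induction i with
    | zero => intro _; rw [hρ0]; exact hv
    | succ n ih =>
      intro hno
      exact (hstep n (fun k hk => hno k (by omega)) (ih (fun k hk => hno k (by omega)))).1
  have hex : ∃ k, ρ k ∈ S := by
    by_contra hno
    push_neg at hno
    have hdec : ∀ i, rank G p S (ρ (i+1)) < rank G p S (ρ i) := fun i =>
      (hstep i (fun k _ => hno k) (hattr i (fun k _ => hno k))).2
    have hb : ∀ i, rank G p S (ρ i) + i ≤ rank G p S (ρ 0) := by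
      intro i; induction i with
      | zero => omega
      | succ n ih => have := hdec n; omega
    have := hb (rank G p S (ρ 0) + 1); omega
  set k₀ := Nat.find hex with hk₀def
  have hk₀S : ρ k₀ ∈ S := Nat.find_spec hex
  have hmin : ∀ j < k₀, ρ j ∉ S := fun j hj => Nat.find_min hex hj
  have hag' : G.Agrees p (T (ρ k₀)) (fun j => ρ (k₀ + j)) := by
    intro i ho
    have h1 := hag (k₀ + i) ho
    rw [comp_eval_after G p S T ρ (k₀ + i) k₀ (by omega) hk₀S hmin] at h1
    have h2 : k₀ + i - k₀ = i := by omega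
    rw [h2] at h1
    show ρ (k₀ + (i + 1)) = _
    rw [show k₀ + (i + 1) = k₀ + i + 1 by omega]
    exact h1
  have hval' : G.ValidPlay Set.univ (fun j => ρ (k₀ + j)) := by
    refine ⟨fun _ => Set.mem_univ _, fun i => ?_⟩
    show G.E (ρ (k₀ + i)) (ρ (k₀ + (i + 1)))
    rw [show k₀ + (i + 1) = (k₀ + i) + 1 by omega]
    exact hval.2 (k₀ + i)
  have hw := hτwin (ρ k₀) hk₀S (fun j => ρ (k₀ + j)) (by simp) hval'
    (by rw [← hTτ (ρ k₀) hk₀S]; exact hag')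
  refine ⟨?_, shift_wins π p ρ k₀ hw.2⟩
  intro i
  rcases lt_or_ge i k₀ with h | h
  · exact Or.inl (hattr i (fun k hk => hmin k (by omega)))
  · have hD := hw.1 (i - k₀)
    have heq : k₀ + (i - k₀) = i := by omega
    rw [heq] at hD
    exact Or.inr hD

end GameGraph
end
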